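/- For real parameters β > 0, c > 0 and γ ∈ ℝ, let w(y) := β·(1 + (y − γ)²/c²)^(−1/2). Then for every y ∈ ℝ, |y|·w(y)² ≤ β²·(|γ| + c). In particular sup_{y ∈ ℝ} |y|·w(y)² < ∞, which is the condition on the weight function required for the posterior influence function of the (ST-)RCGP to be bounded. -/

import Mathlib

/-
Writing `t = 1 + (y - γ)² / c² ≥ 1`, one has `w(y)² = β² / t`, so it suffices that
`|y| ≤ (|γ| + c) t`. This follows from `|y| ≤ |γ| + |y - γ|`, `|γ| ≤ |γ| t` and the AM-GM bound
`|y - γ| ≤ c + (y - γ)² / c = c t`.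
-/

/-- The inverse multiquadric (IMQ) weight function `w(y) = β (1 + (y−γ)²/c²)^{-1/2}`. -/
noncomputable def imqWeight (β c γ : ℝ) : ℝ → ℝ :=
  fun y => β * (1 + (y - γ) ^ 2 / c ^ 2) ^ (-(1 : ℝ) / 2)

lemma Real.rpow_neg_half_sq {x : ℝ} (hx : 0 ≤ x) : (x ^ (-(1 : ℝ) / 2)) ^ 2 = x⁻¹ := by
  rw [← Real.rpow_natCast, ← Real.rpow_mul hx]
  norm_num [Real.rpow_neg_one]

lemma imqWeight_sq (β c γ y : ℝ) :
    imqWeight β c γ y ^ 2 = β ^ 2 / (1 + (y - γ) ^ 2 / c ^ 2) := by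
  rw [imqWeight, mul_pow, Real.rpow_neg_half_sq (by positivity)]
  exact (div_eq_mul_inv _ _).symm

lemma abs_le_mul_one_add_sq_div_sq {c : ℝ} (hc : 0 < c) (x : ℝ) :
    |x| ≤ c * (1 + x ^ 2 / c ^ 2) := by
  have hamgm : 2 * c * |x| ≤ c ^ 2 + x ^ 2 := by
    nlinarith [sq_nonneg (c - |x|), sq_abs x]
  have hexpand : c * (1 + x ^ 2 / c ^ 2) = (c ^ 2 + x ^ 2) / c := by
    field_simp
  rw [hexpand, le_div_iff₀ hc]
  nlinarith [abs_nonneg x]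

lemma abs_le_mul_one_add_sq_sub_div_sq {c : ℝ} (hc : 0 < c) (γ y : ℝ) :
    |y| ≤ (|γ| + c) * (1 + (y - γ) ^ 2 / c ^ 2) := by
  have hγ : |γ| ≤ |γ| * (1 + (y - γ) ^ 2 / c ^ 2) :=
    le_mul_of_one_le_right (abs_nonneg γ) (le_add_of_nonneg_right (by positivity))
  calc |y| = |γ + (y - γ)| := by rw [add_sub_cancel]
    _ ≤ |γ| + |y - γ| := abs_add_le _ _
    _ ≤ (|γ| + c) * (1 + (y - γ) ^ 2 / c ^ 2) := by
      rw [add_mul]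
      exact add_le_add hγ (abs_le_mul_one_add_sq_div_sq hc _)

lemma abs_mul_imqWeight_sq_le (β : ℝ) {c : ℝ} (hc : 0 < c) (γ y : ℝ) :
    |y| * imqWeight β c γ y ^ 2 ≤ β ^ 2 * (|γ| + c) := by
  have ht : 0 < 1 + (y - γ) ^ 2 / c ^ 2 := by positivity
  rw [imqWeight_sq, mul_div_left_comm]
  exact mul_le_mul_of_nonneg_left ((div_le_iff₀ ht).2 (abs_le_mul_one_add_sq_sub_div_sq hc γ y))
    (sq_nonneg β)

theorem stmt10_general (β c γ : ℝ) (hc : 0 < c) :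
    (∀ y : ℝ, |y| * (imqWeight β c γ y) ^ 2 ≤ β ^ 2 * (|γ| + c)) ∧
      BddAbove (Set.range fun y => |y| * (imqWeight β c γ y) ^ 2) := by
  have hbound := abs_mul_imqWeight_sq_le β hc γ
  exact ⟨hbound, β ^ 2 * (|γ| + c), Set.forall_mem_range.2 hbound⟩

/-- **Quantitative core of the robustness result (Proposition 3.3).**
`|y| w(y)² ≤ β²(|γ| + c)` for every `y`; in particular `sup_y |y| w(y)² < ∞`. -/
theorem stmt10 (β c γ : ℝ) (hβ : 0 < β) (hc : 0 < c) :
    (∀ y : ℝ, |y| * (imqWeight β c γ y) ^ 2 ≤ β ^ 2 * (|γ| + c)) ∧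
      BddAbove (Set.range fun y => |y| * (imqWeight β c γ y) ^ 2) :=
  stmt10_general β c γ hc
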